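/- arXiv:hep-th/0111255 — 5 statements merged into one kernel-verified Lean document; each statement's English description precedes it below -/
import Mathlib

section
/- Let R > 0, let P be a 2-dimensional linear subspace of ℝ^{d+1}, and let c ∈ ℝ^{d+1} satisfy ⟨c,p⟩ = 0 for all p ∈ P and ⟨c,c⟩ ≠ 1. Let x : ℝ → ℝ^{d+1} be twice differentiable with x(t) − Rc ∈ P, ⟨x(t),x(t)⟩ = R² and ⟨x′(t),x′(t)⟩ = 1 for all t ∈ ℝ (a planar trajectory on the AdS space of radius R, parametrized by proper time). Then the AdS acceleration vector γ(t) := x″(t) + R^{−2} x(t) satisfies ⟨γ(t),γ(t)⟩ = −⟨c,c⟩ / (R²(⟨c,c⟩ − 1)) for every t ∈ ℝ; in particular ⟨γ(t),γ(t)⟩ is constant, so the motion is uniformly accelerated. -/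
noncomputable section
open Matrix Complex

namespace AdS

/-- The metric signs: +1 for indices 0 and d, −1 otherwise. -/
def eta (d : ℕ) (μ : Fin (d+1)) : ℝ := if μ = 0 ∨ μ = Fin.last d then 1 else -1

/-- The AdS bilinear form on ℝ^{d+1}. -/
def formR (d : ℕ) (x y : Fin (d+1) → ℝ) : ℝ := ∑ μ, eta d μ * x μ * y μ

/-- The ℂ-bilinear extension of the AdS form to ℂ^{d+1}. -/
def formC (d : ℕ) (z w : Fin (d+1) → ℂ) : ℂ := ∑ μ, (eta d μ : ℂ) * z μ * w μ

/-- The real AdS quadric. -/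
def Xd (d : ℕ) : Set (Fin (d+1) → ℝ) := {x | formR d x x = 1}

/-- The complex AdS quadric. -/
def XdC (d : ℕ) : Set (Fin (d+1) → ℂ) := {z | formC d z z = 1}

/-- ℓ(a∧b) : x ↦ ⟨b,x⟩a − ⟨a,x⟩b as a matrix. -/
def ell (d : ℕ) (a b : Fin (d+1) → ℝ) : Matrix (Fin (d+1)) (Fin (d+1)) ℝ :=
  Matrix.of fun i j => eta d j * (b j * a i - a j * b i)

/-- The AdS group. -/
def Ggrp (d : ℕ) : Set (Matrix (Fin (d+1)) (Fin (d+1)) ℝ) :=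
  {Λ | ∀ x y, formR d (Λ.mulVec x) (Λ.mulVec y) = formR d x y}

/-- The connected component of the identity of the AdS group. -/
def G0 (d : ℕ) : Set (Matrix (Fin (d+1)) (Fin (d+1)) ℝ) :=
  connectedComponentIn (Ggrp d) 1

/-- The set C₁ of Lie algebra generators. -/
def C1 (d : ℕ) : Set (Matrix (Fin (d+1)) (Fin (d+1)) ℝ) :=
  {M | ∃ a b : Fin (d+1) → ℝ, formR d a a = 1 ∧ formR d b b = 1 ∧ formR d a b = 0 ∧
    0 < a 0 * b (Fin.last d) - a (Fin.last d) * b 0 ∧ M = ell d a b}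

/-- The cone C₊ generated by C₁. -/
def Cplus (d : ℕ) : Set (Matrix (Fin (d+1)) (Fin (d+1)) ℝ) :=
  {M | ∃ ρ : ℝ, 0 < ρ ∧ ∃ N ∈ C1 d, M = ρ • N}

/-- A real matrix viewed as a complex one. -/
def toC (d : ℕ) (M : Matrix (Fin (d+1)) (Fin (d+1)) ℝ) : Matrix (Fin (d+1)) (Fin (d+1)) ℂ :=
  M.map Complex.ofReal

/-- A real vector viewed as a complex one. -/
def toCv (d : ℕ) (x : Fin (d+1) → ℝ) : Fin (d+1) → ℂ := fun μ => (x μ : ℂ)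

/-- The generator M₀d = ℓ(e₀ ∧ e_d). -/
def M0d (d : ℕ) : Matrix (Fin (d+1)) (Fin (d+1)) ℝ :=
  ell d (Pi.single 0 1) (Pi.single (Fin.last d) 1)

/-- The future tuboid Z₁₊ of the complex AdS quadric. -/
def Z1plus (d : ℕ) : Set (Fin (d+1) → ℂ) :=
  {z | ∃ M ∈ C1 d, ∃ c ∈ Xd d, ∃ τ : ℂ, 0 < τ.im ∧
    z = (NormedSpace.exp (τ • toC d M)).mulVec (toCv d c)}

/-- The past tuboid Z₁₋ of the complex AdS quadric. -/
def Z1minus (d : ℕ) : Set (Fin (d+1) → ℂ) :=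
  {z | ∃ M ∈ C1 d, ∃ c ∈ Xd d, ∃ τ : ℂ, τ.im < 0 ∧
    z = (NormedSpace.exp (τ • toC d M)).mulVec (toCv d c)}

end AdS

/-!
Differentiating `⟨x,x⟩ = R²` and `⟨x',x'⟩ = 1` gives `⟨x,x'⟩ = 0`, `⟨x',x''⟩ = 0` and
`⟨x,x''⟩ = -1`. The vectors `u = x - Rc`, `x'` and `x''` all lie in the plane `P`, and `u ⊥ x'`
with `⟨u,u⟩ = R²(1 - ⟨c,c⟩) ≠ 0`, so `u, x'` is an orthogonal basis of `P`. Hence `x''`, being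
orthogonal to `x'`, is `⟨x'',u⟩/⟨u,u⟩ • u = -u/⟨u,u⟩`, so `⟨x'',x''⟩ = 1/⟨u,u⟩` and
`⟨γ,γ⟩ = ⟨x'',x''⟩ + 2R⁻²⟨x,x''⟩ + R⁻⁴⟨x,x⟩ = 1/(R²(1 - ⟨c,c⟩)) - R⁻²`.
-/

theorem Submodule.deriv_mem_of_forall_mem {E : Type*} [NormedAddCommGroup E] [NormedSpace ℝ E]
    {P : Submodule ℝ E} (hP : IsClosed (P : Set E)) {f : ℝ → E} (hf : ∀ s, f s ∈ P) (t : ℝ) :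
    deriv f t ∈ P := by
  have hspan : Submodule.span ℝ (f '' Set.univ) ≤ P :=
    Submodule.span_le.2 (by rintro _ ⟨s, -, rfl⟩; exact hf s)
  exact hP.closure_subset_iff.2 hspan (range_deriv_subset_closure_span_image f dense_univ ⟨t, rfl⟩)

theorem LinearMap.BilinForm.eq_smul_of_finrank_eq_two {K V : Type*} [Field K] [AddCommGroup V]
    [Module K V] (B : LinearMap.BilinForm K V) {P : Submodule K V} (hP : Module.finrank K P = 2)
    {u v w : V} (hu : u ∈ P) (hv : v ∈ P) (hw : w ∈ P) (huv : B u v = 0) (hvu : B v u = 0)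
    (huu : B u u ≠ 0) (hvv : B v v ≠ 0) (hwv : B w v = 0) :
    w = (B w u / B u u) • u := by
  have hindep : LinearIndependent K ![u, v] := by
    refine LinearIndependent.pair_iff.2 fun a b hab => ?_
    have hu' : a * B u u = 0 := by simpa [hvu] using congrArg (B · u) hab
    have hv' : b * B v v = 0 := by simpa [huv] using congrArg (B · v) hab
    exact ⟨(mul_eq_zero.1 hu').resolve_right huu, (mul_eq_zero.1 hv').resolve_right hvv⟩
  have hspan : Submodule.span K {u, v} = P := by
    have : FiniteDimensional K P := Module.finite_of_finrank_eq_succ hP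
    refine Submodule.eq_of_le_of_finrank_le (Submodule.span_le.2 ?_) ?_
    · rintro _ (rfl | rfl) <;> assumption
    · rw [hP, ← Matrix.range_cons_cons_empty, finrank_span_eq_card hindep]
      simp
  obtain ⟨a, b, rfl⟩ := Submodule.mem_span_pair.1 (hspan ▸ hw)
  have hb : b = 0 := by simpa [huv, hvv] using hwv
  subst hb
  simp [huu]

namespace ContinuousLinearMap

variable {E : Type*} [NormedAddCommGroup E] [NormedSpace ℝ E] (B : E →L[ℝ] E →L[ℝ] ℝ)

theorem apply_add_apply_eq_zero_of_forall_eq {f g : ℝ → E} {f' g' : E} {t C : ℝ}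
    (hf : HasDerivAt f f' t) (hg : HasDerivAt g g' t) (h : ∀ s, B (f s) (g s) = C) :
    B (f t) g' + B f' (g t) = 0 := by
  have hB := B.hasDerivAt_of_bilinear (fun _ => hf) (fun _ => hg)
  rw [funext h] at hB
  exact hB.unique (hasDerivAt_const t C)

variable {B}

theorem apply_deriv_eq_zero_of_apply_self_eq (hB : ∀ u v, B u v = B v u) {x : ℝ → E}
    (hx : Differentiable ℝ x) {C : ℝ} (hxx : ∀ s, B (x s) (x s) = C) (t : ℝ) :
    B (x t) (deriv x t) = 0 := by
  have h := B.apply_add_apply_eq_zero_of_forall_eq (hx t).hasDerivAt (hx t).hasDerivAt hxx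
  rw [hB (deriv x t)] at h
  linarith

theorem apply_deriv_deriv_of_apply_self_eq (hB : ∀ u v, B u v = B v u) {x : ℝ → E}
    (hx1 : Differentiable ℝ x) (hx2 : Differentiable ℝ (deriv x)) {C : ℝ}
    (hxx : ∀ s, B (x s) (x s) = C) (t : ℝ) :
    B (x t) (deriv (deriv x) t) = -B (deriv x t) (deriv x t) := by
  have h := B.apply_add_apply_eq_zero_of_forall_eq (hx1 t).hasDerivAt (hx2 t).hasDerivAt
    (apply_deriv_eq_zero_of_apply_self_eq hB hx1 hxx)
  linarith

theorem apply_deriv_deriv_self_of_planar (hB : ∀ u v, B u v = B v u) {P : Submodule ℝ E}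
    (hPc : IsClosed (P : Set E)) (hP : Module.finrank ℝ P = 2) {c : E}
    (hcP : ∀ p ∈ P, B c p = 0) (hcc : B c c ≠ 1) {R : ℝ} (hR : R ≠ 0) {x : ℝ → E}
    (hx1 : Differentiable ℝ x) (hx2 : Differentiable ℝ (deriv x))
    (hplane : ∀ t, x t - R • c ∈ P) (hads : ∀ t, B (x t) (x t) = R ^ 2)
    (hproper : ∀ t, B (deriv x t) (deriv x t) = 1) (t : ℝ) :
    B (deriv (deriv x) t) (deriv (deriv x) t) = (R ^ 2 * (1 - B c c))⁻¹ := by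
  have hx'P : ∀ s, deriv x s ∈ P := fun s => by
    simpa using Submodule.deriv_mem_of_forall_mem hPc hplane s
  have hx''P : deriv (deriv x) t ∈ P := Submodule.deriv_mem_of_forall_mem hPc hx'P t
  have hxx' : B (x t) (deriv x t) = 0 := apply_deriv_eq_zero_of_apply_self_eq hB hx1 hads t
  have hx'x'' : B (deriv x t) (deriv (deriv x) t) = 0 :=
    apply_deriv_eq_zero_of_apply_self_eq hB hx2 hproper t
  have hxx'' : B (x t) (deriv (deriv x) t) = -1 := by
    rw [apply_deriv_deriv_of_apply_self_eq hB hx1 hx2 hads, hproper]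
  have hcx : B c (x t) = R * B c c := by
    have := hcP _ (hplane t)
    rw [map_sub, map_smul, smul_eq_mul] at this
    linarith
  have huP := hplane t
  generalize hu : x t - R • c = u at huP
  have huu : B u u = R ^ 2 * (1 - B c c) := by
    simp only [← hu, map_sub, map_smul, _root_.sub_apply, _root_.smul_apply, smul_eq_mul, hads,
      hB _ c, hcx]
    ring
  have hx'u : B (deriv x t) u = 0 := by
    rw [← hu, map_sub, map_smul, hB _ (x t), hB _ c, hxx', hcP _ (hx'P t), smul_zero, sub_zero]
  have hx''u : B (deriv (deriv x) t) u = -1 := by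
    rw [← hu, map_sub, map_smul, hB _ (x t), hB _ c, hxx'', hcP _ hx''P, smul_zero, sub_zero]
  have huu0 : B u u ≠ 0 := by
    rw [huu]; exact mul_ne_zero (pow_ne_zero 2 hR) (sub_ne_zero.2 hcc.symm)
  have hx'' := LinearMap.BilinForm.eq_smul_of_finrank_eq_two B.toLinearMap₁₂ hP huP
    (hx'P t) hx''P ((hB _ _).trans hx'u) hx'u huu0 (by simp [hproper]) ((hB _ _).trans hx'x'')
  simp only [toLinearMap₁₂_apply_apply_apply, hx''u] at hx''
  rw [hx'', map_smul, map_smul₂, ← huu]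
  simp only [smul_eq_mul]
  field_simp

theorem apply_accel_self_of_planar (hB : ∀ u v, B u v = B v u) {P : Submodule ℝ E}
    (hPc : IsClosed (P : Set E)) (hP : Module.finrank ℝ P = 2) {c : E}
    (hcP : ∀ p ∈ P, B c p = 0) (hcc : B c c ≠ 1) {R : ℝ} (hR : R ≠ 0) {x : ℝ → E}
    (hx1 : Differentiable ℝ x) (hx2 : Differentiable ℝ (deriv x))
    (hplane : ∀ t, x t - R • c ∈ P) (hads : ∀ t, B (x t) (x t) = R ^ 2)
    (hproper : ∀ t, B (deriv x t) (deriv x t) = 1) (t : ℝ) :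
    B (deriv (deriv x) t + (R ^ 2)⁻¹ • x t) (deriv (deriv x) t + (R ^ 2)⁻¹ • x t)
      = -B c c / (R ^ 2 * (B c c - 1)) := by
  have hx''x'' := apply_deriv_deriv_self_of_planar hB hPc hP hcP hcc hR hx1 hx2 hplane hads
    hproper t
  have hxx'' := apply_deriv_deriv_of_apply_self_eq hB hx1 hx2 hads t
  simp only [map_add, map_smul, _root_.add_apply, _root_.smul_apply, smul_eq_mul, hx''x'',
    hB _ (x t), hxx'', hads, hproper]
  have : B c c - 1 ≠ 0 := sub_ne_zero.2 hcc
  have : 1 - B c c ≠ 0 := sub_ne_zero.2 hcc.symm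
  field_simp
  ring

end ContinuousLinearMap

namespace AdS

def formRCLM (d : ℕ) : (Fin (d+1) → ℝ) →L[ℝ] (Fin (d+1) → ℝ) →L[ℝ] ℝ :=
  ∑ μ, eta d μ • (ContinuousLinearMap.proj μ).smulRight (ContinuousLinearMap.proj μ)

theorem formRCLM_apply (d : ℕ) (x y : Fin (d+1) → ℝ) : formRCLM d x y = formR d x y := by
  simp [formRCLM, formR, mul_assoc]

theorem formRCLM_comm (d : ℕ) (x y : Fin (d+1) → ℝ) : formRCLM d x y = formRCLM d y x := by
  simp only [formRCLM_apply, formR, mul_right_comm _ (x _)]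

theorem planar_trajectory_uniformly_accelerated_general
    (d : ℕ) (R : ℝ) (hR : 0 < R)
    (P : Submodule ℝ (Fin (d+1) → ℝ)) (hP : Module.finrank ℝ P = 2)
    (c : Fin (d+1) → ℝ) (hcP : ∀ p ∈ P, formR d c p = 0) (hcc : formR d c c ≠ 1)
    (x : ℝ → (Fin (d+1) → ℝ))
    (hx1 : Differentiable ℝ x) (hx2 : Differentiable ℝ (deriv x))
    (hplane : ∀ t : ℝ, x t - R • c ∈ P)
    (hads : ∀ t : ℝ, formR d (x t) (x t) = R ^ 2)
    (hproper : ∀ t : ℝ, formR d (deriv x t) (deriv x t) = 1) :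
    ∀ t : ℝ,
      formR d (deriv (deriv x) t + (R ^ 2)⁻¹ • x t) (deriv (deriv x) t + (R ^ 2)⁻¹ • x t)
        = - formR d c c / (R ^ 2 * (formR d c c - 1)) := by
  simp only [← formRCLM_apply] at hcP hcc hads hproper ⊢
  exact (formRCLM d).apply_accel_self_of_planar (formRCLM_comm d) P.closed_of_finiteDimensional
    hP hcP hcc hR.ne' hx1 hx2 hplane hads hproper

/-- planar trajectories on the AdS spacetime of radius `R` are uniformly
accelerated, with `⟨γ,γ⟩ = −⟨c,c⟩/(R²(⟨c,c⟩−1))`. -/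
theorem planar_trajectory_uniformly_accelerated
    (d : ℕ) (hd : 2 ≤ d) (R : ℝ) (hR : 0 < R)
    (P : Submodule ℝ (Fin (d+1) → ℝ)) (hP : Module.finrank ℝ P = 2)
    (c : Fin (d+1) → ℝ) (hcP : ∀ p ∈ P, formR d c p = 0) (hcc : formR d c c ≠ 1)
    (x : ℝ → (Fin (d+1) → ℝ))
    (hx1 : Differentiable ℝ x) (hx2 : Differentiable ℝ (deriv x))
    (hplane : ∀ t : ℝ, x t - R • c ∈ P)
    (hads : ∀ t : ℝ, formR d (x t) (x t) = R ^ 2)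
    (hproper : ∀ t : ℝ, formR d (deriv x t) (deriv x t) = 1) :
    ∀ t : ℝ,
      formR d (deriv (deriv x) t + (R ^ 2)⁻¹ • x t) (deriv (deriv x) t + (R ^ 2)⁻¹ • x t)
        = - formR d c c / (R ^ 2 * (formR d c c - 1)) :=
  planar_trajectory_uniformly_accelerated_general d R hR P hP c hcP hcc x hx1 hx2 hplane hads
    hproper

end AdS
end
end

section
/- Fix R > 0, real numbers x¹, …, x^{d−2} and v, and set σ = (R² + Σ_{i=1}^{d−2}(xⁱ)²)^{1/2}. Define x : ℝ → ℝ^{d+1} by x⁰(t) = t, xⁱ(t) = xⁱ for 1 ≤ i ≤ d−2, x^{d−1}(t) = σ sinh v + t²/(2σe^{v}), and x^d(t) = σ cosh v − t²/(2σe^{v}) (a parabolic trajectory). Then for all t ∈ ℝ: ⟨x(t),x(t)⟩ = R², ⟨x′(t),x′(t)⟩ = 1 (t is the proper time), and the AdS acceleration vector γ(t) := x″(t) + R^{−2}x(t) satisfies ⟨γ(t),γ(t)⟩ = −1/R²; i.e. parabolic trajectories are uniformly accelerated with acceleration exactly 1/R. -/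
noncomputable section
open Matrix Complex

namespace AdS

/-
Only the coordinates 0, d − 1, d move: x(t) = x(0) + t e₀ + (t²/2) k with
k = (e_{d−1} − e_d)/(σ eᵛ), a null vector orthogonal to e₀ with ⟨x(0), k⟩ = −(sinh v + cosh v)/eᵛ = −1.
Hence ⟨x, x⟩ = ⟨x(0), x(0)⟩ = σ² (cosh² v − sinh² v) − Σ (xⁱ)² = R², x′ = e₀ + t k has ⟨x′, x′⟩ = 1, and
⟨k + x/R², k + x/R²⟩ = 2⟨k, x⟩/R² + 1/R² = −1/R².
-/

def transverseNormSq (d : ℕ) (m : Fin (d+1) → ℝ) : ℝ :=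
  ∑ i : Fin (d+1), if 1 ≤ i.1 ∧ i.1 ≤ d - 2 then m i ^ 2 else 0

lemma transverseNormSq_nonneg (d : ℕ) (m : Fin (d+1) → ℝ) : 0 ≤ transverseNormSq d m :=
  Finset.sum_nonneg fun i _ => by split_ifs <;> positivity

def splitVec (d : ℕ) (m : Fin (d+1) → ℝ) (a₀ a₁ a₂ s : ℝ) : Fin (d+1) → ℝ := fun μ =>
  if μ = 0 then a₀ else if μ.1 = d - 1 then a₁ else if μ = Fin.last d then a₂ else s * m μ

lemma hasDerivAt_sq_div_two_mul (q t : ℝ) : HasDerivAt (fun t => t ^ 2 / (2 * q)) (t / q) t :=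
  ((hasDerivAt_pow 2 t).div_const (2 * q)).congr_deriv (by push_cast; ring)

section splitVec

variable {d : ℕ} {m : Fin (d+1) → ℝ}

lemma formR_splitVec (hd : 2 ≤ d) (a₀ a₁ a₂ s b₀ b₁ b₂ r : ℝ) :
    formR d (splitVec d m a₀ a₁ a₂ s) (splitVec d m b₀ b₁ b₂ r) =
      a₀ * b₀ - a₁ * b₁ + a₂ * b₂ - s * r * transverseNormSq d m := by
  have hpt : ∀ μ : Fin (d+1), eta d μ * splitVec d m a₀ a₁ a₂ s μ * splitVec d m b₀ b₁ b₂ r μ =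
      (if μ = 0 then a₀ * b₀ else 0) + (if μ = ⟨d - 1, by omega⟩ then -(a₁ * b₁) else 0)
      + (if μ = Fin.last d then a₂ * b₂ else 0)
      - s * r * (if 1 ≤ μ.1 ∧ μ.1 ≤ d - 2 then m μ ^ 2 else 0) := by
    intro μ
    simp only [eta, splitVec, Fin.ext_iff, Fin.val_zero, Fin.val_last]
    split_ifs <;> first | omega | ring
  simp only [formR, transverseNormSq, hpt, Finset.sum_add_distrib, Finset.sum_sub_distrib,
    Finset.sum_ite_eq', Finset.mem_univ, if_true, ← Finset.mul_sum]
  ring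

lemma splitVec_add_smul (a₀ a₁ a₂ s c b₀ b₁ b₂ r : ℝ) :
    splitVec d m a₀ a₁ a₂ s + c • splitVec d m b₀ b₁ b₂ r =
      splitVec d m (a₀ + c * b₀) (a₁ + c * b₁) (a₂ + c * b₂) (s + c * r) := by
  ext μ
  simp only [splitVec, Pi.add_apply, Pi.smul_apply, smul_eq_mul]
  split_ifs <;> ring

lemma hasDerivAt_splitVec {f₀ f₁ f₂ : ℝ → ℝ} {a₀ a₁ a₂ t : ℝ} (h₀ : HasDerivAt f₀ a₀ t)
    (h₁ : HasDerivAt f₁ a₁ t) (h₂ : HasDerivAt f₂ a₂ t) (s : ℝ) :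
    HasDerivAt (fun t => splitVec d m (f₀ t) (f₁ t) (f₂ t) s) (splitVec d m a₀ a₁ a₂ 0) t := by
  rw [hasDerivAt_pi]
  intro μ
  simp only [splitVec]
  split_ifs
  · exact h₀
  · exact h₁
  · exact h₂
  · simpa using hasDerivAt_const t (s * m μ)

lemma deriv_splitVec_parabola (a₁ a₂ q : ℝ) :
    deriv (fun t => splitVec d m t (a₁ + t ^ 2 / (2 * q)) (a₂ - t ^ 2 / (2 * q)) 1) =
      fun t => splitVec d m 1 (t / q) (-(t / q)) 0 :=
  funext fun t => (hasDerivAt_splitVec (hasDerivAt_id t)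
    ((hasDerivAt_sq_div_two_mul q t).const_add a₁)
    ((hasDerivAt_sq_div_two_mul q t).const_sub a₂) 1).deriv

lemma deriv_splitVec_line (q t : ℝ) :
    deriv (fun t => splitVec d m 1 (t / q) (-(t / q)) 0) t =
      splitVec d m 0 (1 / q) (-(1 / q)) 0 :=
  (hasDerivAt_splitVec (hasDerivAt_const t 1) ((hasDerivAt_id t).div_const q)
    ((hasDerivAt_id t).div_const q).neg 0).deriv

end splitVec

lemma mul_cosh_sub_sq_sub_mul_sinh_add_sq {σ : ℝ} (hσ : σ ≠ 0) (v t : ℝ) :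
    (σ * Real.cosh v - t ^ 2 / (2 * (σ * Real.exp v))) ^ 2
      - (σ * Real.sinh v + t ^ 2 / (2 * (σ * Real.exp v))) ^ 2 = σ ^ 2 - t ^ 2 := by
  field_simp
  linear_combination (4 * σ ^ 4 * Real.exp v ^ 2) * Real.cosh_sq_sub_sinh_sq v
    - (4 * σ ^ 2 * Real.exp v * t ^ 2) * Real.sinh_add_cosh v

/-- parabolic trajectories lie on the AdS spacetime of radius `R`, are
parametrized by proper time, and are uniformly accelerated with `⟨γ,γ⟩ = −1/R²`. -/
theorem parabolic_trajectory_uniformly_accelerated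
    (d : ℕ) (hd : 2 ≤ d) (R : ℝ) (hR : 0 < R)
    (xv : Fin (d+1) → ℝ) (v : ℝ)
    (σ : ℝ)
    (hσ : σ = Real.sqrt (R ^ 2 + ∑ i : Fin (d+1),
      if 1 ≤ i.1 ∧ i.1 ≤ d - 2 then (xv i) ^ 2 else 0))
    (x : ℝ → (Fin (d+1) → ℝ))
    (hx : ∀ t : ℝ, ∀ μ : Fin (d+1),
      x t μ = if μ = 0 then t
        else if μ.1 = d - 1 then σ * Real.sinh v + t ^ 2 / (2 * σ * Real.exp v)
        else if μ = Fin.last d then σ * Real.cosh v - t ^ 2 / (2 * σ * Real.exp v)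
        else xv μ) :
    ∀ t : ℝ,
      formR d (x t) (x t) = R ^ 2 ∧
      formR d (deriv x t) (deriv x t) = 1 ∧
      formR d (deriv (deriv x) t + (R ^ 2)⁻¹ • x t)
        (deriv (deriv x) t + (R ^ 2)⁻¹ • x t) = - (1 / R ^ 2) := by
  have hS := transverseNormSq_nonneg d xv
  have hσ_pos : 0 < σ := hσ ▸ Real.sqrt_pos.2 (by positivity)
  have hσ_sq : σ ^ 2 = R ^ 2 + transverseNormSq d xv := hσ ▸ Real.sq_sqrt (by positivity)
  have hx_eq : x = fun t => splitVec d xv t (σ * Real.sinh v + t ^ 2 / (2 * (σ * Real.exp v)))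
      (σ * Real.cosh v - t ^ 2 / (2 * (σ * Real.exp v))) 1 := by
    funext t μ
    simp only [hx, splitVec, one_mul, mul_assoc]
  have hx' := deriv_splitVec_parabola (m := xv) (σ * Real.sinh v) (σ * Real.cosh v) (σ * Real.exp v)
  rw [← hx_eq] at hx'
  intro t
  have hnorm : formR d (x t) (x t) = R ^ 2 := by
    rw [hx_eq, formR_splitVec hd]
    linear_combination mul_cosh_sub_sq_sub_mul_sinh_add_sq hσ_pos.ne' v t + hσ_sq
  refine ⟨hnorm, ?_, ?_⟩
  · rw [hx', formR_splitVec hd]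
    ring
  · rw [hx', deriv_splitVec_line, hx_eq, splitVec_add_smul, formR_splitVec hd]
    rw [hx_eq, formR_splitVec hd] at hnorm
    have hq : σ * Real.exp v * (σ * Real.exp v)⁻¹ = 1 := mul_inv_cancel₀ (by positivity)
    have hR2 : R ^ 2 * (R ^ 2)⁻¹ = 1 := mul_inv_cancel₀ (by positivity)
    -- x″ = k and ⟨k, x(t)⟩ = −(x^{d−1} + x^d)/(σ eᵛ) = −(sinh v + cosh v)/eᵛ = −1
    linear_combination ((R ^ 2)⁻¹) ^ 2 * hnorm
      - (2 * (R ^ 2)⁻¹ * σ / (σ * Real.exp v)) * Real.sinh_add_cosh v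
      - 2 * (R ^ 2)⁻¹ * hq + (R ^ 2)⁻¹ * hR2

end AdS
end
end

section
/- Let a, b ∈ ℝ^{d+1} satisfy ⟨a,a⟩ = ⟨b,b⟩ = 1 and ⟨a,b⟩ = 0. Then there exists Λ ∈ G₀ with Λe₀ = a and Λe_d = b if and only if a⁰b^d − a^d b⁰ > 0. Consequently C₁ = {Λ M_{0d} Λ^{−1} : Λ ∈ G₀}. -/
/-!
Along `G₀` the minor `a⁰b^d − a^d b⁰` of `(Λa, Λb)` varies continuously with `Λ`, and on
orthonormal pairs its square is at least `1`; so its sign cannot change on the connected set `G₀`.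
Conversely, for unit vectors `x, y` with `⟨x, y⟩ ≥ 0` the product of the reflections in `x + y`
and in `y` lies in `G₀` and carries `x` to `y`; three such maps carry `(e₀, e_d)` to any positively
oriented orthonormal pair. The description of `C₁` then follows from `Λ ℓ(a∧b) Λ⁻¹ = ℓ(Λa∧Λb)`.
-/

noncomputable section
open Matrix Complex

theorem IsPreconnected.lt_iff_lt_of_forall_ne {X α : Type*} [TopologicalSpace X] [LinearOrder α]
    [TopologicalSpace α] [OrderClosedTopology α] {s : Set X} (hs : IsPreconnected s)
    {f : X → α} (hf : ContinuousOn f s) {c : α} (hfc : ∀ x ∈ s, f x ≠ c) {x y : X}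
    (hx : x ∈ s) (hy : y ∈ s) : c < f x ↔ c < f y := by
  suffices key : ∀ x ∈ s, ∀ y ∈ s, c < f x → c < f y from ⟨key x hx y hy, key y hy x hx⟩
  intro x hx y hy hcx
  by_contra! hyc
  obtain ⟨z, hz, hzc⟩ := hs.intermediate_value hy hx hf ⟨hyc, hcx.le⟩
  exact hfc z hz hzc

namespace AdS

variable {d : ℕ}

lemma eta_zero : eta d 0 = 1 := by simp [eta]

lemma eta_last : eta d (Fin.last d) = 1 := by simp [eta]

lemma eta_ne_zero (μ : Fin (d+1)) : eta d μ ≠ 0 := by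
  unfold eta; split_ifs <;> norm_num

lemma formR_eq_dotProduct (x y : Fin (d+1) → ℝ) : formR d x y = (eta d * x) ⬝ᵥ y := rfl

lemma formR_comm (x y : Fin (d+1) → ℝ) : formR d x y = formR d y x := by
  simp only [formR, mul_right_comm]

lemma formR_add_left (x y z : Fin (d+1) → ℝ) :
    formR d (x + y) z = formR d x z + formR d y z := by
  simp only [formR_eq_dotProduct, mul_add, add_dotProduct]

lemma formR_sub_left (x y z : Fin (d+1) → ℝ) :
    formR d (x - y) z = formR d x z - formR d y z := by
  simp only [formR_eq_dotProduct, mul_sub, sub_dotProduct]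

lemma formR_smul_left (r : ℝ) (x y : Fin (d+1) → ℝ) :
    formR d (r • x) y = r * formR d x y := by
  simp only [formR_eq_dotProduct, mul_smul_comm, smul_dotProduct, smul_eq_mul]

lemma formR_add_right (x y z : Fin (d+1) → ℝ) :
    formR d x (y + z) = formR d x y + formR d x z := by
  simp only [formR_eq_dotProduct, dotProduct_add]

lemma formR_sub_right (x y z : Fin (d+1) → ℝ) :
    formR d x (y - z) = formR d x y - formR d x z := by
  simp only [formR_eq_dotProduct, dotProduct_sub]

lemma formR_smul_right (r : ℝ) (x y : Fin (d+1) → ℝ) :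
    formR d x (r • y) = r * formR d x y := by
  simp only [formR_eq_dotProduct, dotProduct_smul, smul_eq_mul]

lemma formR_single_left (μ : Fin (d+1)) (r : ℝ) (y : Fin (d+1) → ℝ) :
    formR d (Pi.single μ r) y = eta d μ * r * y μ := by
  simp [formR, Pi.single_apply]

lemma formR_single_right (x : Fin (d+1) → ℝ) (μ : Fin (d+1)) (r : ℝ) :
    formR d x (Pi.single μ r) = eta d μ * x μ * r := by
  rw [formR_comm, formR_single_left]; ring

@[fun_prop]
lemma Continuous.formR {X : Type*} [TopologicalSpace X] {x y : X → Fin (d+1) → ℝ}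
    (hx : Continuous x) (hy : Continuous y) : Continuous fun t => formR d (x t) (y t) := by
  unfold AdS.formR; fun_prop

lemma zero_ne_last [NeZero d] : (0 : Fin (d+1)) ≠ Fin.last d := Fin.last_pos'.ne

lemma formR_eq_sub_sum [NeZero d] (x y : Fin (d+1) → ℝ) :
    formR d x y = x 0 * y 0 + x (Fin.last d) * y (Fin.last d)
      - ∑ μ ∈ {0, Fin.last d}ᶜ, x μ * y μ := by
  rw [formR, ← Finset.sum_add_sum_compl {0, Fin.last d}, Finset.sum_pair zero_ne_last,
    eta_zero, eta_last, sub_eq_add_neg, ← Finset.sum_neg_distrib]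
  congr 1
  · ring
  · refine Finset.sum_congr rfl fun μ hμ => ?_
    simp only [Finset.mem_compl, Finset.mem_insert, Finset.mem_singleton] at hμ
    simp [eta, hμ]

lemma one_mem_Ggrp : (1 : Matrix (Fin (d+1)) (Fin (d+1)) ℝ) ∈ Ggrp d := by
  intro x y; simp only [one_mulVec]

lemma mul_mem_Ggrp {A B : Matrix (Fin (d+1)) (Fin (d+1)) ℝ} (hA : A ∈ Ggrp d)
    (hB : B ∈ Ggrp d) : A * B ∈ Ggrp d := by
  intro x y; rw [← mulVec_mulVec, ← mulVec_mulVec, hA, hB]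

lemma isUnit_of_mem_Ggrp {Λ : Matrix (Fin (d+1)) (Fin (d+1)) ℝ} (hΛ : Λ ∈ Ggrp d) :
    IsUnit Λ := by
  refine mulVec_injective_iff_isUnit.mp fun x y hxy => funext fun μ => ?_
  have h := hΛ x (Pi.single μ 1)
  rw [hxy, hΛ, formR_single_right, formR_single_right] at h
  simpa [eta_ne_zero] using h.symm

lemma G0_subset_Ggrp : G0 d ⊆ Ggrp d := connectedComponentIn_subset _ _

lemma one_mem_G0 : (1 : Matrix (Fin (d+1)) (Fin (d+1)) ℝ) ∈ G0 d :=
  mem_connectedComponentIn one_mem_Ggrp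

lemma subset_G0_of_isPreconnected {s : Set (Matrix (Fin (d+1)) (Fin (d+1)) ℝ)}
    (hs : IsPreconnected s) (hsG : s ⊆ Ggrp d) {A : Matrix (Fin (d+1)) (Fin (d+1)) ℝ}
    (hAs : A ∈ s) (hA : A ∈ G0 d) : s ⊆ G0 d := by
  rw [G0, connectedComponentIn_eq hA]
  exact hs.subset_connectedComponentIn hAs hsG

lemma mul_mem_G0 {A B : Matrix (Fin (d+1)) (Fin (d+1)) ℝ} (hA : A ∈ G0 d) (hB : B ∈ G0 d) :
    A * B ∈ G0 d := by
  refine subset_G0_of_isPreconnected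
    (isPreconnected_connectedComponentIn.image (A * ·) (by fun_prop)) ?_
    ⟨1, one_mem_G0, mul_one A⟩ hA ⟨B, hB, rfl⟩
  rintro _ ⟨X, hX, rfl⟩
  exact mul_mem_Ggrp (G0_subset_Ggrp hA) (G0_subset_Ggrp hX)

lemma mem_G0_of_path {γ : ℝ → Matrix (Fin (d+1)) (Fin (d+1)) ℝ} (hγ : Continuous γ)
    (hγG : ∀ t ∈ Set.Icc (0 : ℝ) 1, γ t ∈ Ggrp d) (hγ0 : γ 0 = 1) : γ 1 ∈ G0 d := by
  refine subset_G0_of_isPreconnected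
    ((isPreconnected_Icc (a := (0 : ℝ)) (b := 1)).image γ hγ.continuousOn) ?_
    ⟨0, by simp, hγ0⟩ one_mem_G0 ⟨1, by simp, rfl⟩
  rintro _ ⟨t, ht, rfl⟩
  exact hγG t ht

lemma ell_mulVec (a b x : Fin (d+1) → ℝ) :
    ell d a b *ᵥ x = formR d b x • a - formR d a x • b := by
  ext i
  simp only [ell, mulVec, dotProduct, of_apply, formR, Pi.sub_apply, Pi.smul_apply, smul_eq_mul,
    Finset.sum_mul, ← Finset.sum_sub_distrib]
  exact Finset.sum_congr rfl fun j _ => by ring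

lemma mul_ell_mul_inv {Λ : Matrix (Fin (d+1)) (Fin (d+1)) ℝ} (hΛ : Λ ∈ Ggrp d)
    (a b : Fin (d+1) → ℝ) : Λ * ell d a b * Λ⁻¹ = ell d (Λ *ᵥ a) (Λ *ᵥ b) := by
  have hcomm : Λ * ell d a b = ell d (Λ *ᵥ a) (Λ *ᵥ b) * Λ := by
    refine mulVec_injective (funext fun x => ?_)
    simp only [← mulVec_mulVec, ell_mulVec, mulVec_sub, mulVec_smul]
    rw [hΛ, hΛ]
  rw [hcomm, Matrix.mul_assoc, mul_nonsing_inv _ ((isUnit_of_mem_Ggrp hΛ).map detMonoidHom),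
    Matrix.mul_one]

def orient (d : ℕ) (a b : Fin (d+1) → ℝ) : ℝ := a 0 * b (Fin.last d) - a (Fin.last d) * b 0

lemma one_le_orient_sq [NeZero d] {a b : Fin (d+1) → ℝ} (ha : formR d a a = 1)
    (hb : formR d b b = 1) (hab : formR d a b = 0) : 1 ≤ orient d a b ^ 2 := by
  rw [formR_eq_sub_sum] at ha hb hab
  set s : Finset (Fin (d+1)) := {0, Fin.last d}ᶜ
  have hcs : (∑ μ ∈ s, a μ * b μ) ^ 2 ≤ (∑ μ ∈ s, a μ ^ 2) * ∑ μ ∈ s, b μ ^ 2 :=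
    Finset.sum_mul_sq_le_sq_mul_sq s a b
  have hA : 0 ≤ ∑ μ ∈ s, a μ ^ 2 := Finset.sum_nonneg fun μ _ => sq_nonneg _
  have hB : 0 ≤ ∑ μ ∈ s, b μ ^ 2 := Finset.sum_nonneg fun μ _ => sq_nonneg _
  simp only [← sq] at ha hb
  -- Lagrange's identity in the timelike plane, then Cauchy–Schwarz in the spacelike directions
  have hlagrange : orient d a b ^ 2 = (1 + ∑ μ ∈ s, a μ ^ 2) * (1 + ∑ μ ∈ s, b μ ^ 2)
      - (∑ μ ∈ s, a μ * b μ) ^ 2 := by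
    unfold orient
    linear_combination (b 0 ^ 2 + b (Fin.last d) ^ 2) * ha + (1 + ∑ μ ∈ s, a μ ^ 2) * hb
      - (a 0 * b 0 + a (Fin.last d) * b (Fin.last d) + ∑ μ ∈ s, a μ * b μ) * hab
  nlinarith

lemma orient_mulVec_pos_iff [NeZero d] {Λ : Matrix (Fin (d+1)) (Fin (d+1)) ℝ} (hΛ : Λ ∈ G0 d)
    {a b : Fin (d+1) → ℝ} (ha : formR d a a = 1) (hb : formR d b b = 1)
    (hab : formR d a b = 0) : 0 < orient d (Λ *ᵥ a) (Λ *ᵥ b) ↔ 0 < orient d a b := by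
  have hne : ∀ M ∈ G0 d, orient d (M *ᵥ a) (M *ᵥ b) ≠ 0 := by
    intro M hM h0
    have hMG := G0_subset_Ggrp hM
    have h1 := one_le_orient_sq (a := M *ᵥ a) (b := M *ᵥ b) (by rwa [hMG]) (by rwa [hMG])
      (by rwa [hMG])
    norm_num [h0] at h1
  simpa using isPreconnected_connectedComponentIn.lt_iff_lt_of_forall_ne
    (f := fun M => orient d (M *ᵥ a) (M *ᵥ b)) (by unfold orient; fun_prop) hne hΛ one_mem_G0

lemma orient_single_mulVec_pos [NeZero d] {Λ : Matrix (Fin (d+1)) (Fin (d+1)) ℝ}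
    (hΛ : Λ ∈ G0 d) : 0 < orient d (Λ *ᵥ Pi.single 0 1) (Λ *ᵥ Pi.single (Fin.last d) 1) := by
  rw [orient_mulVec_pos_iff hΛ]
  all_goals simp [orient, formR_single_left, eta_zero, eta_last, zero_ne_last.symm]

/-- The product of the reflections in `x + y` and in `y`. -/
def transport (d : ℕ) (x y : Fin (d+1) → ℝ) : Matrix (Fin (d+1)) (Fin (d+1)) ℝ :=
  1 - (1 + formR d x y)⁻¹ • vecMulVec (x + y) (eta d * (x + y)) + (2 : ℝ) • vecMulVec y (eta d * x)

lemma transport_mulVec (x y z : Fin (d+1) → ℝ) :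
    transport d x y *ᵥ z
      = z - (formR d (x + y) z / (1 + formR d x y)) • (x + y) + (2 * formR d x z) • y := by
  simp only [transport, add_mulVec, sub_mulVec, one_mulVec, smul_mulVec, vecMulVec_mulVec,
    op_smul_eq_smul, ← formR_eq_dotProduct, smul_smul, div_eq_inv_mul]

lemma transport_mulVec_self {x y : Fin (d+1) → ℝ} (hx : formR d x x = 1)
    (hxy : 1 + formR d x y ≠ 0) : transport d x y *ᵥ x = y := by
  rw [transport_mulVec, formR_add_left, hx, formR_comm y x, div_self hxy]
  module

lemma transport_mulVec_of_formR_eq_zero {x y z : Fin (d+1) → ℝ} (hxz : formR d x z = 0)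
    (hyz : formR d y z = 0) : transport d x y *ᵥ z = z := by
  rw [transport_mulVec, formR_add_left, hxz, hyz]
  simp

lemma transport_self {x : Fin (d+1) → ℝ} (hx : formR d x x = 1) : transport d x x = 1 := by
  refine mulVec_injective (funext fun z => ?_)
  rw [transport_mulVec, hx, formR_add_left, one_mulVec]
  module

lemma transport_mem_Ggrp {x y : Fin (d+1) → ℝ} (hx : formR d x x = 1) (hy : formR d y y = 1)
    (hxy : 1 + formR d x y ≠ 0) : transport d x y ∈ Ggrp d := by
  intro z w
  simp only [transport_mulVec, formR_add_left, formR_add_right, formR_sub_left, formR_sub_right,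
    formR_smul_left, formR_smul_right, hx, hy, formR_comm y x, formR_comm z x, formR_comm z y]
  field_simp
  ring

/-- `transport d x y` is joined to `transport d x x = 1` through `transport d x (p t)`, where the
unit vector `p t` moves from `x` to `y` in the plane spanned by `x` and `y`. -/
lemma transport_mem_G0 {x y : Fin (d+1) → ℝ} (hx : formR d x x = 1) (hy : formR d y y = 1)
    (hxy : 0 ≤ formR d x y) : transport d x y ∈ G0 d := by
  set c := formR d x y
  set q := y - c • x
  have hxq : formR d x q = 0 := by simp [q, formR_sub_right, formR_smul_right, hx, c]
  have hqq : formR d q q = 1 - c ^ 2 := by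
    simp only [q, formR_sub_left, formR_sub_right, formR_smul_left, formR_smul_right, hx, hy,
      formR_comm y x]
    ring
  set p : ℝ → Fin (d+1) → ℝ := fun t => √(1 - t ^ 2 * (1 - c ^ 2)) • x + t • q
  have hxp (t : ℝ) : formR d x (p t) = √(1 - t ^ 2 * (1 - c ^ 2)) := by
    simp [p, formR_add_right, formR_smul_right, hx, hxq]
  have hpp (t : ℝ) (ht : t ∈ Set.Icc (0 : ℝ) 1) : formR d (p t) (p t) = 1 := by
    have h : 0 ≤ 1 - t ^ 2 * (1 - c ^ 2) := by nlinarith [ht.1, ht.2]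
    simp only [p, formR_add_left, formR_add_right, formR_smul_left, formR_smul_right, hx, hxq,
      hqq, formR_comm q x]
    linear_combination Real.sq_sqrt h
  have hp0 : p 0 = x := by simp [p]
  have hp1 : p 1 = y := by simp [p, q, Real.sqrt_sq hxy]
  have hγ : Continuous fun t => transport d x (p t) := by
    unfold transport
    fun_prop (disch := intro t; rw [hxp]; positivity)
  simpa [hp1] using mem_G0_of_path hγ
    (fun t ht => transport_mem_Ggrp hx (hpp t ht) (by rw [hxp]; positivity))
    (by simp only [hp0, transport_self hx])

lemma exists_mem_G0_mulVec_single_zero [NeZero d] {a : Fin (d+1) → ℝ} (ha : formR d a a = 1) :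
    ∃ Λ ∈ G0 d, Λ *ᵥ Pi.single 0 1 = a := by
  -- go through `z = ±e_d`, with the sign making `⟨z, a⟩ ≥ 0`
  obtain ⟨s, hs, has⟩ : ∃ s : ℝ, s * s = 1 ∧ 0 ≤ s * a (Fin.last d) := by
    rcases le_total 0 (a (Fin.last d)) with h | h
    exacts [⟨1, by norm_num, by linarith⟩, ⟨-1, by norm_num, by linarith⟩]
  set z : Fin (d+1) → ℝ := Pi.single (Fin.last d) s
  have he : formR d (Pi.single 0 1) (Pi.single 0 1) = 1 := by simp [formR_single_left, eta_zero]
  have hz : formR d z z = 1 := by simp [z, formR_single_left, eta_last, hs]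
  have hez : formR d (Pi.single 0 1) z = 0 := by
    simp [z, formR_single_left, NeZero.ne d]
  have hza : formR d z a = s * a (Fin.last d) := by simp [z, formR_single_left, eta_last]
  refine ⟨transport d z a * transport d (Pi.single 0 1) z,
    mul_mem_G0 (transport_mem_G0 hz ha (hza ▸ has)) (transport_mem_G0 he hz hez.ge), ?_⟩
  rw [← mulVec_mulVec, transport_mulVec_self he (by rw [hez]; norm_num),
    transport_mulVec_self hz (by rw [hza]; linarith)]

lemma exists_mem_G0_mulVec_single_eq [NeZero d] {a b : Fin (d+1) → ℝ} (ha : formR d a a = 1)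
    (hb : formR d b b = 1) (hab : formR d a b = 0) (hpos : 0 < orient d a b) :
    ∃ Λ ∈ G0 d, Λ *ᵥ Pi.single 0 1 = a ∧ Λ *ᵥ Pi.single (Fin.last d) 1 = b := by
  obtain ⟨Λ, hΛ, rfl⟩ := exists_mem_G0_mulVec_single_zero ha
  have hΛG := G0_subset_Ggrp hΛ
  obtain ⟨c, rfl⟩ := mulVec_surjective_iff_isUnit.mpr (isUnit_of_mem_Ggrp hΛG) b
  have hed : formR d (Pi.single (Fin.last d) 1) (Pi.single (Fin.last d) 1) = 1 := by
    simp [formR_single_left, eta_last]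
  rw [hΛG] at hb hab ha
  rw [orient_mulVec_pos_iff hΛ ha hb hab] at hpos
  have hc0 : c 0 = 0 := by simpa [formR_single_left, eta_zero] using hab
  have hcd : 0 < formR d (Pi.single (Fin.last d) 1) c := by
    simpa [formR_single_left, eta_last, orient, zero_ne_last.symm] using hpos
  refine ⟨Λ * transport d (Pi.single (Fin.last d) 1) c,
    mul_mem_G0 hΛ (transport_mem_G0 hed hb hcd.le), ?_, ?_⟩
  · rw [← mulVec_mulVec, transport_mulVec_of_formR_eq_zero]
    · simp [formR_single_left, zero_ne_last.symm]
    · simp [formR_single_right, hc0]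
  · rw [← mulVec_mulVec, transport_mulVec_self hed (by linarith)]

/-- an orthonormal timelike pair `(a,b)` is of the form `(Λe₀, Λe_d)` with
`Λ ∈ G₀` iff `a⁰b^d − a^d b⁰ > 0`; consequently `C₁ = {Λ M₀d Λ⁻¹ : Λ ∈ G₀}`. -/
theorem orthonormal_pair_characterization
    (d : ℕ) (hd : 2 ≤ d) (a b : Fin (d+1) → ℝ)
    (haa : formR d a a = 1) (hbb : formR d b b = 1) (habf : formR d a b = 0) :
    ((∃ Λ ∈ G0 d, Λ.mulVec (Pi.single 0 1 : Fin (d+1) → ℝ) = a ∧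
        Λ.mulVec (Pi.single (Fin.last d) 1 : Fin (d+1) → ℝ) = b) ↔
      0 < a 0 * b (Fin.last d) - a (Fin.last d) * b 0) ∧
    C1 d = {M | ∃ Λ ∈ G0 d, M = Λ * M0d d * Λ⁻¹} := by
  have : NeZero d := ⟨by omega⟩
  refine ⟨⟨?_, exists_mem_G0_mulVec_single_eq haa hbb habf⟩, Set.ext fun M => ⟨?_, ?_⟩⟩
  · rintro ⟨Λ, hΛ, rfl, rfl⟩
    exact orient_single_mulVec_pos hΛ
  · rintro ⟨a, b, ha, hb, hab, hpos, rfl⟩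
    obtain ⟨Λ, hΛ, rfl, rfl⟩ := exists_mem_G0_mulVec_single_eq ha hb hab hpos
    exact ⟨Λ, hΛ, (mul_ell_mul_inv (G0_subset_Ggrp hΛ) _ _).symm⟩
  · rintro ⟨Λ, hΛ, rfl⟩
    have hΛG := G0_subset_Ggrp hΛ
    refine ⟨_, _, ?_, ?_, ?_, orient_single_mulVec_pos hΛ, mul_ell_mul_inv hΛG _ _⟩
    all_goals rw [hΛG]; simp [formR_single_left, eta_zero, eta_last, zero_ne_last.symm]

end AdS
end
end

section
/- Let z ∈ ℂ^{d+1} have the form z = (i y⁰, x¹, …, x^d) with y⁰, x¹, …, x^d real, x^d > 0, and ⟨z,z⟩ = 1 (i.e. z lies in the 'Euclidean' AdS space X_d^{(ℰ)}). Then: if y⁰ = 0, z ∈ X_d; if y⁰ > 0, z ∈ Z_{1+}; if y⁰ < 0, z ∈ Z_{1−}. In particular X_d^{(ℰ)} ⊂ X_d ∪ Z_{1+} ∪ Z_{1−}. -/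
noncomputable section
open Matrix Complex

/-!
The generator `M₀d` acts on the `(e₀, e_d)`-plane as a rotation generator: if `P` is the
projection onto that plane then `M₀d * M₀d = -P`, so
`exp (τ M₀d) = 1 + (cos τ - 1) P + sin τ M₀d`; for `τ = i t` this is the hyperbolic rotation
`(c⁰, c^d) ↦ (i sinh t · c^d, cosh t · c^d)` on points with `c⁰ = 0`.

Now `⟨z, z⟩ = 1` gives `(x^d)² - (y⁰)² = 1 + Σ_{0<j<d} (x^j)² > 0`, so
`(x^d, y⁰) = r (cosh t, sinh t)` with `r > 0`, and `z = exp (i t M₀d) c` for the real point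
`c = (0, x¹, …, x^{d-1}, r)`, which lies on `X_d` since `r² = (x^d)² - (y⁰)²`. Finally
`M₀d ∈ C₁` and `t` has the sign of `y⁰`.
-/

section
variable {𝔸 : Type*} [Ring 𝔸] [Algebra ℂ 𝔸]

def IsIdempotentElem.prodRingHom {e : 𝔸} (he : IsIdempotentElem e) : ℂ × ℂ →+* 𝔸 where
  toFun p := p.1 • (1 - e) + p.2 • e
  map_one' := by simp
  map_mul' p q := by
    have h1 : (1 - e) * (1 - e) = 1 - e := he.one_sub
    have h2 : (1 - e) * e = 0 := by rw [sub_mul, one_mul, he.eq, sub_self]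
    have h3 : e * (1 - e) = 0 := by rw [mul_sub, mul_one, he.eq, sub_self]
    simp only [Prod.fst_mul, Prod.snd_mul, add_mul, mul_add, smul_mul_smul_comm, h1, h2, h3,
      he.eq, smul_zero, zero_add, add_zero, mul_smul]
  map_zero' := by simp
  map_add' p q := by simp only [Prod.fst_add, Prod.snd_add, add_smul]; abel
end

section
variable {𝔸 : Type*} [NormedRing 𝔸] [NormedAlgebra ℂ 𝔸]

theorem IsIdempotentElem.exp_smul [Algebra ℚ 𝔸] {e : 𝔸} (he : IsIdempotentElem e) (s : ℂ) :
    NormedSpace.exp (s • e) = 1 + (Complex.exp s - 1) • e := by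
  have hcont : Continuous he.prodRingHom := by
    change Continuous fun p : ℂ × ℂ => p.1 • (1 - e) + p.2 • e
    fun_prop
  have hse : s • e = he.prodRingHom (0, s) := by simp [IsIdempotentElem.prodRingHom]
  rw [hse, ← NormedSpace.map_exp _ hcont]
  simp [IsIdempotentElem.prodRingHom, ← Complex.exp_eq_exp_ℂ, sub_smul, smul_sub]
  abel

theorem exp_smul_eq_cos_sin_of_mul_self_eq_neg [NormedAlgebra ℚ 𝔸] [CompleteSpace 𝔸]
    {P A : 𝔸} (hP : IsIdempotentElem P) (hPA : P * A = A) (hAP : A * P = A) (hA : A * A = -P)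
    (τ : ℂ) :
    NormedSpace.exp (τ • A) = 1 + (Complex.cos τ - 1) • P + Complex.sin τ • A := by
  have expand : ∀ a b : ℂ, ((2⁻¹ : ℂ) • (P + a • A)) * ((2⁻¹ : ℂ) • (P + b • A))
      = (4⁻¹ * (1 - a * b)) • P + (4⁻¹ * (a + b)) • A := by
    intro a b
    simp only [add_mul, mul_add, mul_smul_comm, smul_mul_assoc, hP.eq, hPA, hAP, hA]
    module
  -- `E` and `F` are the spectral projections of `A` for the eigenvalues `-i` and `i`
  set E : 𝔸 := (2⁻¹ : ℂ) • (P + Complex.I • A) with hE_def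
  set F : 𝔸 := (2⁻¹ : ℂ) • (P + (-Complex.I) • A) with hF_def
  have hE : IsIdempotentElem E := by
    rw [IsIdempotentElem, expand, Complex.I_mul_I]
    match_scalars <;> ring
  have hF : IsIdempotentElem F := by
    rw [IsIdempotentElem, expand, neg_mul_neg, Complex.I_mul_I]
    match_scalars <;> ring
  have hEF : E * F = 0 := by
    rw [expand, mul_neg, Complex.I_mul_I]
    match_scalars <;> ring
  have hFE : F * E = 0 := by
    rw [expand, neg_mul, Complex.I_mul_I]
    match_scalars <;> ring
  have hτA : τ • A = (-(τ * Complex.I)) • E + (τ * Complex.I) • F := by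
    rw [hE_def, hF_def]
    match_scalars
    · linear_combination τ * Complex.I_sq
    · ring
  have hcomm : Commute ((-(τ * Complex.I)) • E) ((τ * Complex.I) • F) :=
    ((show Commute E F from hEF.trans hFE.symm).smul_left _).smul_right _
  rw [hτA, NormedSpace.exp_add_of_commute hcomm, hE.exp_smul, hF.exp_smul, add_mul, mul_add,
    mul_add, smul_mul_smul_comm, hEF, smul_zero, one_mul, mul_one, add_zero]
  rw [hE_def, hF_def, Complex.cos, Complex.sin, one_mul]
  simp only [neg_mul]
  match_scalars <;> ring
end

theorem Real.exists_pos_mul_cosh_mul_sinh {x y : ℝ} (hxy : |y| < x) :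
    ∃ r > 0, ∃ t : ℝ, r * Real.cosh t = x ∧ r * Real.sinh t = y := by
  have hpos : 0 < x ^ 2 - y ^ 2 := by nlinarith [abs_nonneg y, sq_abs y]
  set r := √(x ^ 2 - y ^ 2)
  have hr : 0 < r := Real.sqrt_pos.2 hpos
  have hr2 : r ^ 2 = x ^ 2 - y ^ 2 := Real.sq_sqrt hpos.le
  refine ⟨r, hr, Real.arsinh (y / r), ?_, by rw [Real.sinh_arsinh]; field_simp⟩
  have hcosh : √(1 + (y / r) ^ 2) = x / r := by
    rw [Real.sqrt_eq_iff_mul_self_eq_of_pos (div_pos (by linarith [abs_nonneg y]) hr)]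
    field_simp
    linarith
  rw [Real.cosh_arsinh, hcosh]
  field_simp

theorem Real.sign_sinh (t : ℝ) : SignType.sign (Real.sinh t) = SignType.sign t := by
  simp only [sign_apply, Real.sinh_pos_iff, Real.sinh_neg_iff]

namespace AdS

/-- The projection onto the `(e₀, e_d)`-plane. -/
def P0d (d : ℕ) : Matrix (Fin (d+1)) (Fin (d+1)) ℂ :=
  single 0 0 1 + single (Fin.last d) (Fin.last d) 1

theorem formC_toCv {d : ℕ} (x y : Fin (d+1) → ℝ) :
    formC d (toCv d x) (toCv d y) = formR d x y := by
  simp [formC, formR, toCv]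

theorem toC_M0d (d : ℕ) : toC d (M0d d) = single 0 (Fin.last d) 1 - single (Fin.last d) 0 1 := by
  ext i j
  by_cases hj0 : j = 0 <;> by_cases hjl : j = Fin.last d <;>
    by_cases hi0 : i = 0 <;> by_cases hil : i = Fin.last d <;>
    simp_all [toC, M0d, ell, single, Pi.single_apply, eta, eq_comm]

section
variable {d : ℕ} (h0 : (0 : Fin (d+1)) ≠ Fin.last d)
include h0

theorem isIdempotentElem_P0d : IsIdempotentElem (P0d d) := by
  simp [IsIdempotentElem, P0d, add_mul, mul_add, h0, h0.symm]

theorem P0d_mul_toC_M0d : P0d d * toC d (M0d d) = toC d (M0d d) := by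
  simp [P0d, toC_M0d, add_mul, mul_sub, h0, h0.symm]

theorem toC_M0d_mul_P0d : toC d (M0d d) * P0d d = toC d (M0d d) := by
  simp [P0d, toC_M0d, sub_mul, mul_add, h0, h0.symm]
  abel

theorem toC_M0d_mul_self : toC d (M0d d) * toC d (M0d d) = -P0d d := by
  simp [P0d, toC_M0d, sub_mul, mul_sub, h0, h0.symm]
  abel

theorem exp_smul_toC_M0d (τ : ℂ) :
    NormedSpace.exp (τ • toC d (M0d d)) =
      1 + (cos τ - 1) • P0d d + sin τ • toC d (M0d d) := by
  -- `exp` does not depend on the norm, so any Banach-algebra norm on matrices will do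
  let : NormedRing (Matrix (Fin (d+1)) (Fin (d+1)) ℂ) := Matrix.linftyOpNormedRing
  let : NormedAlgebra ℂ (Matrix (Fin (d+1)) (Fin (d+1)) ℂ) := Matrix.linftyOpNormedAlgebra
  let : NormedAlgebra ℚ (Matrix (Fin (d+1)) (Fin (d+1)) ℂ) := Matrix.linftyOpNormedAlgebra
  exact exp_smul_eq_cos_sin_of_mul_self_eq_neg (isIdempotentElem_P0d h0) (P0d_mul_toC_M0d h0)
    (toC_M0d_mul_P0d h0) (toC_M0d_mul_self h0) τ

theorem exp_smul_toC_M0d_mulVec (τ : ℂ) (v : Fin (d+1) → ℂ) (μ : Fin (d+1)) :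
    (NormedSpace.exp (τ • toC d (M0d d))).mulVec v μ =
      if μ = 0 then cos τ * v 0 + sin τ * v (Fin.last d)
      else if μ = Fin.last d then cos τ * v (Fin.last d) - sin τ * v 0
      else v μ := by
  rw [exp_smul_toC_M0d h0]
  rcases eq_or_ne μ 0 with rfl | hμ0
  · simp [add_mulVec, sub_mulVec, smul_mulVec, P0d, toC_M0d, single_mulVec, h0]
    ring
  rcases eq_or_ne μ (Fin.last d) with rfl | hμd
  · simp [add_mulVec, sub_mulVec, smul_mulVec, P0d, toC_M0d, single_mulVec, h0.symm]
    ring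
  · simp [add_mulVec, sub_mulVec, smul_mulVec, P0d, toC_M0d, single_mulVec, hμ0, hμd]

theorem formC_self_eq (z : Fin (d+1) → ℂ) :
    formC d z z = z 0 ^ 2 + z (Fin.last d) ^ 2 - ∑ μ ∈ {0, Fin.last d}ᶜ, z μ ^ 2 := by
  rw [formC, ← Finset.sum_add_sum_compl {0, Fin.last d}, Finset.sum_pair h0, sub_eq_add_neg,
    ← Finset.sum_neg_distrib]
  congr 1
  · simp [eta]
    ring
  · refine Finset.sum_congr rfl fun μ hμ => ?_
    simp only [Finset.mem_compl, Finset.mem_insert, Finset.mem_singleton, not_or] at hμ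
    simp [eta, hμ.1, hμ.2]
    ring

theorem formC_self_eq_of_eq_off_plane {z : Fin (d+1) → ℂ} {x : Fin (d+1) → ℝ}
    (hzx : ∀ μ, μ ≠ 0 → μ ≠ Fin.last d → z μ = x μ) :
    formC d z z = z 0 ^ 2 + z (Fin.last d) ^ 2 - ((∑ μ ∈ {0, Fin.last d}ᶜ, x μ ^ 2 : ℝ) : ℂ) := by
  rw [formC_self_eq h0]
  push_cast
  refine congrArg _ (Finset.sum_congr rfl fun μ hμ => ?_)
  simp only [Finset.mem_compl, Finset.mem_insert, Finset.mem_singleton, not_or] at hμ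
  rw [hzx μ hμ.1 hμ.2]

theorem exists_mem_Xd_exp_mulVec_eq {y0 : ℝ} {xv : Fin (d+1) → ℝ} {z : Fin (d+1) → ℂ}
    (hz : ∀ μ, z μ = if μ = 0 then I * y0 else xv μ) (hxd : 0 < xv (Fin.last d))
    (hquad : formC d z z = 1) :
    ∃ c ∈ Xd d, ∃ t : ℝ, SignType.sign t = SignType.sign y0 ∧
      z = (NormedSpace.exp (((t : ℂ) * I) • toC d (M0d d))).mulVec (toCv d c) := by
  set S := ∑ μ ∈ {0, Fin.last d}ᶜ, xv μ ^ 2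
  have hq : xv (Fin.last d) ^ 2 - y0 ^ 2 - S = 1 := by
    rw [formC_self_eq_of_eq_off_plane h0 fun μ hμ _ => by rw [hz, if_neg hμ], hz, hz, if_pos rfl,
      if_neg h0.symm] at hquad
    have : ((xv (Fin.last d) ^ 2 - y0 ^ 2 - S : ℝ) : ℂ) = 1 := by
      push_cast
      linear_combination hquad - y0 ^ 2 * I_sq
    exact_mod_cast this
  have hS : 0 ≤ S := Finset.sum_nonneg fun μ _ => sq_nonneg (xv μ)
  obtain ⟨r, hr, t, hcosh, hsinh⟩ :=
    Real.exists_pos_mul_cosh_mul_sinh (y := y0) (abs_lt_of_sq_lt_sq (by linarith) hxd.le)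
  have hr2 : r ^ 2 = xv (Fin.last d) ^ 2 - y0 ^ 2 := by
    rw [← hcosh, ← hsinh]
    linear_combination -r ^ 2 * Real.cosh_sq_sub_sinh_sq t
  -- undo the hyperbolic rotation: `c` is `z` with `(i y⁰, x^d)` replaced by `(0, r)`
  let c : Fin (d+1) → ℝ := fun μ => if μ = 0 then 0 else if μ = Fin.last d then r else xv μ
  refine ⟨c, ?_, t, ?_, ?_⟩
  · show formR d c c = 1
    have : formC d (toCv d c) (toCv d c) = ((r ^ 2 - S : ℝ) : ℂ) := by
      rw [formC_self_eq_of_eq_off_plane h0 (x := xv) fun μ h1 h2 => by simp [toCv, c, h1, h2]]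
      simp [toCv, c, h0.symm, S]
    rw [formC_toCv] at this
    linarith [Complex.ofReal_injective this]
  · rw [← Real.sign_sinh, ← hsinh, sign_mul, sign_pos hr, one_mul]
  · funext μ
    rw [exp_smul_toC_M0d_mulVec h0, cos_mul_I, sin_mul_I, hz]
    split_ifs with h1 h2
    · simp [toCv, c, h0.symm, ← hsinh]
      ring
    · subst h2
      simp [toCv, c, h0.symm, ← hcosh]
      ring
    · simp [toCv, c, h1, h2]

theorem M0d_mem_C1 : M0d d ∈ C1 d := by
  refine ⟨Pi.single 0 1, Pi.single (Fin.last d) 1, ?_, ?_, ?_, ?_, rfl⟩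
  · simp [formR, Pi.single_apply, eta]
  · simp [formR, Pi.single_apply, eta]
  · simp [formR, Pi.single_apply, h0.symm]
  · simp [h0]

end

/-- the "Euclidean" AdS spacetime is contained in `X_d ∪ Z₁₊ ∪ Z₁₋`:
a point `z = (iy⁰, x¹, …, x^d)` of `X_d^{(c)}` with `x^d > 0` lies in `X_d` if `y⁰ = 0`,
in `Z₁₊` if `y⁰ > 0`, and in `Z₁₋` if `y⁰ < 0`. -/
theorem euclidean_AdS_in_tuboids
    (d : ℕ) (hd : 2 ≤ d) (y0 : ℝ) (xv : Fin (d+1) → ℝ)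
    (z : Fin (d+1) → ℂ)
    (hz : ∀ μ : Fin (d+1), z μ = if μ = 0 then Complex.I * (y0 : ℂ) else (xv μ : ℂ))
    (hxd : 0 < xv (Fin.last d))
    (hquad : formC d z z = 1) :
    (y0 = 0 → ∃ x ∈ Xd d, z = toCv d x) ∧
    (0 < y0 → z ∈ Z1plus d) ∧
    (y0 < 0 → z ∈ Z1minus d) := by
  have h0 : (0 : Fin (d+1)) ≠ Fin.last d := by simp [Fin.ext_iff]; omega
  obtain ⟨c, hc, t, hsign, rfl⟩ := exists_mem_Xd_exp_mulVec_eq h0 hz hxd hquad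
  refine ⟨fun hy => ⟨c, hc, ?_⟩, fun hy => ⟨M0d d, M0d_mem_C1 h0, c, hc, _, ?_, rfl⟩,
    fun hy => ⟨M0d d, M0d_mem_C1 h0, c, hc, _, ?_, rfl⟩⟩
  · rw [hy, sign_zero, sign_eq_zero_iff] at hsign
    simp [hsign]
  · rw [sign_pos hy, sign_eq_one_iff] at hsign
    simpa using hsign
  · rw [sign_neg hy, sign_eq_neg_one_iff] at hsign
    simpa using hsign

end AdS
end
end

section
/- If z = x + iy ∈ A₁, then the complex numbers z⁰ = x⁰ + iy⁰ and z^d = x^d + iy^d are both nonzero, and Im(z⁰/z^d) > 0. -/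
/-! Only the last condition defining A₁ matters: y⁰x^d − x⁰y^d is the numerator of
Im(z⁰/z^d) = (y⁰x^d − x⁰y^d)/|z^d|², and it vanishes as soon as z⁰ = 0 or z^d = 0. -/

noncomputable section
open Matrix Complex

namespace AdS

/-- The set A₁ = {x+iy : ⟨x,x⟩−⟨y,y⟩ = 1, ⟨x,y⟩ = 0, ⟨y,y⟩ > 0, y⁰x^d − x⁰y^d > 0}. -/
def A1 (d : ℕ) : Set (Fin (d+1) → ℂ) :=
  {z | formR d (fun μ => (z μ).re) (fun μ => (z μ).re)
        - formR d (fun μ => (z μ).im) (fun μ => (z μ).im) = 1 ∧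
      formR d (fun μ => (z μ).re) (fun μ => (z μ).im) = 0 ∧
      0 < formR d (fun μ => (z μ).im) (fun μ => (z μ).im) ∧
      0 < (z 0).im * (z (Fin.last d)).re - (z 0).re * (z (Fin.last d)).im}

end AdS

namespace Complex

theorem div_im_eq_cross_div_normSq (w v : ℂ) :
    (w / v).im = (w.im * v.re - w.re * v.im) / normSq v := by
  rw [div_im]
  ring

theorem left_ne_zero_of_cross_pos {w v : ℂ} (h : 0 < w.im * v.re - w.re * v.im) : w ≠ 0 := by
  rintro rfl
  simp at h

theorem right_ne_zero_of_cross_pos {w v : ℂ} (h : 0 < w.im * v.re - w.re * v.im) : v ≠ 0 := by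
  rintro rfl
  simp at h

theorem im_div_pos_of_cross_pos {w v : ℂ} (h : 0 < w.im * v.re - w.re * v.im) :
    0 < (w / v).im := by
  rw [div_im_eq_cross_div_normSq]
  exact div_pos h (normSq_pos.mpr (right_ne_zero_of_cross_pos h))

end Complex

namespace AdS

theorem A1_coordinates_general (d : ℕ) (z : Fin (d+1) → ℂ) (hz : z ∈ A1 d) :
    z 0 ≠ 0 ∧ z (Fin.last d) ≠ 0 ∧ 0 < (z 0 / z (Fin.last d)).im := by
  obtain ⟨-, -, -, hcross⟩ := hz
  exact ⟨Complex.left_ne_zero_of_cross_pos hcross, Complex.right_ne_zero_of_cross_pos hcross,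
    Complex.im_div_pos_of_cross_pos hcross⟩

/-- for `z ∈ A₁`, the coordinates `z⁰` and `z^d` are nonzero and
`Im(z⁰/z^d) > 0`. -/
theorem A1_coordinates (d : ℕ) (hd : 2 ≤ d) (z : Fin (d+1) → ℂ) (hz : z ∈ A1 d) :
    z 0 ≠ 0 ∧ z (Fin.last d) ≠ 0 ∧ 0 < (z 0 / z (Fin.last d)).im :=
  A1_coordinates_general d z hz

end AdS
end
end
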